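/- Let V ⊆ ℝⁿ × ℝⁿ and U ⊆ ℝⁿ × ℝⁿ be open, let z², ζ² : V → ℝⁿ be smooth with (z²_ξ)ᵀζ² = 0 and (z²_x)ᵀζ² = ξ at every point (x,ξ) ∈ V, let z¹, ζ¹ : U → ℝⁿ be smooth, and let ξ̂ : W → ℝⁿ be smooth on an open set W ⊆ ℝⁿ × U with (x, ξ̂(x;y,η)) ∈ V and ζ²(x, ξ̂(x;y,η)) = ζ¹(y,η) for all (x;y,η) ∈ W. Define φ(x;y,η) = ⟨z²(x, ξ̂(x;y,η)) − z¹(y,η), ζ¹(y,η)⟩. Then ∇_x φ(x;y,η) = ξ̂(x;y,η) on W. Moreover, if x*, ξ* : U → ℝⁿ are smooth with z²(x*(y,η), ξ*(y,η)) = z¹(y,η), ζ²(x*(y,η), ξ*(y,η)) = ζ¹(y,η) and ξ̂(x*(y,η); y, η) = ξ*(y,η), then φ(x*(y,η); y, η) = 0. -/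

import Mathlib

/-!
Of the two factors of `φ`, only `z²(x, ξ̂)` depends on `x`. By the chain rule its `x`-derivative
is `z²_x + z²_ξ ∂ₓξ̂`, and pairing with `ζ¹ = ζ²(x, ξ̂)` gives
`(z²_x)ᵀζ² + (∂ₓξ̂)ᵀ(z²_ξ)ᵀζ² = ξ̂ + 0`: the invariance of `ξ·dx` under `Φ₂`.
At `(x*, ξ*)` the first factor is `z²(x*, ξ*) − z¹ = 0`.
-/

open Matrix

/-- The continuous linear map `(u, v) ↦ A u + B v` on `ℝⁿ × ℝⁿ`; a map whose derivative at a
point has this form has Jacobian `A` in the first variable and `B` in the second. -/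
noncomputable def jacCLM {n : ℕ} (A B : Matrix (Fin n) (Fin n) ℝ) :
    ((Fin n → ℝ) × (Fin n → ℝ)) →L[ℝ] (Fin n → ℝ) :=
  LinearMap.toContinuousLinearMap
    (A.mulVecLin.comp (LinearMap.fst ℝ (Fin n → ℝ) (Fin n → ℝ)) +
      B.mulVecLin.comp (LinearMap.snd ℝ (Fin n → ℝ) (Fin n → ℝ)))

lemma jacCLM_apply {n : ℕ} (A B : Matrix (Fin n) (Fin n) ℝ) (u v : Fin n → ℝ) :
    jacCLM A B (u, v) = A *ᵥ u + B *ᵥ v := by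
  simp [jacCLM]

lemma dotProduct_jacCLM_of_transpose_mulVec {n : ℕ} {A B : Matrix (Fin n) (Fin n) ℝ}
    {w a : Fin n → ℝ} (hA : Aᵀ *ᵥ w = a) (hB : Bᵀ *ᵥ w = 0) (u v : Fin n → ℝ) :
    w ⬝ᵥ jacCLM A B (u, v) = a ⬝ᵥ u := by
  rw [jacCLM_apply, dotProduct_add, dotProduct_mulVec, dotProduct_mulVec, ← mulVec_transpose,
    ← mulVec_transpose, hA, hB, zero_dotProduct, add_zero]

theorem fderiv_dotProduct_apply {𝕜 E ι : Type*} [NontriviallyNormedField 𝕜] [CompleteSpace 𝕜]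
    [NormedAddCommGroup E] [NormedSpace 𝕜 E] [Fintype ι] {f g : E → ι → 𝕜} {x : E}
    (hf : DifferentiableAt 𝕜 f x) (hg : DifferentiableAt 𝕜 g x) (v : E) :
    fderiv 𝕜 (fun y => f y ⬝ᵥ g y) x v = fderiv 𝕜 f x v ⬝ᵥ g x + f x ⬝ᵥ fderiv 𝕜 g x v := by
  have := (dotProductBilin 𝕜 𝕜 : (ι → 𝕜) →ₗ[𝕜] _).toContinuousBilinearMap.fderiv_of_bilinear hf hg
  simp only [LinearMap.toContinuousBilinearMap_apply, dotProductBilin_apply_apply] at this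
  rw [this]
  simp [add_comm]

theorem fderiv_sub_dotProduct_comp_snd_apply_inl {𝕜 E F ι : Type*} [NontriviallyNormedField 𝕜]
    [CompleteSpace 𝕜] [NormedAddCommGroup E] [NormedSpace 𝕜 E] [NormedAddCommGroup F]
    [NormedSpace 𝕜 F] [Fintype ι] {a : E × F → ι → 𝕜} {b c : F → ι → 𝕜} {q : E × F}
    (ha : DifferentiableAt 𝕜 a q) (hb : DifferentiableAt 𝕜 b q.2)
    (hc : DifferentiableAt 𝕜 c q.2) (u : E) :
    fderiv 𝕜 (fun q => (a q - b q.2) ⬝ᵥ c q.2) q (u, 0) = fderiv 𝕜 a q (u, 0) ⬝ᵥ c q.2 := by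
  have hb' : HasFDerivAt (fun q : E × F => b q.2)
      ((fderiv 𝕜 b q.2).comp (ContinuousLinearMap.snd 𝕜 E F)) q :=
    hb.hasFDerivAt.comp q hasFDerivAt_snd
  have hc' : HasFDerivAt (fun q : E × F => c q.2)
      ((fderiv 𝕜 c q.2).comp (ContinuousLinearMap.snd 𝕜 E F)) q :=
    hc.hasFDerivAt.comp q hasFDerivAt_snd
  rw [fderiv_dotProduct_apply (ha.fun_sub hb'.differentiableAt) hc'.differentiableAt,
    (ha.hasFDerivAt.fun_sub hb').fderiv, hc'.fderiv]
  simp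

theorem composition_phase_x_derivative_general (n : ℕ)
    (V U : Set ((Fin n → ℝ) × (Fin n → ℝ))) (hUopen : IsOpen U)
    (z2 ζ2 : (Fin n → ℝ) × (Fin n → ℝ) → Fin n → ℝ)
    (Z2x Z2ξ : (Fin n → ℝ) × (Fin n → ℝ) → Matrix (Fin n) (Fin n) ℝ)
    (hdz2 : ∀ p ∈ V, HasFDerivAt z2 (jacCLM (Z2x p) (Z2ξ p)) p)
    (hrel1 : ∀ p ∈ V, (Z2ξ p)ᵀ *ᵥ ζ2 p = 0)
    (hrel2 : ∀ p ∈ V, (Z2x p)ᵀ *ᵥ ζ2 p = p.2)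
    (z1 ζ1 : (Fin n → ℝ) × (Fin n → ℝ) → Fin n → ℝ)
    (hz1 : ContDiffOn ℝ (⊤ : ℕ∞) z1 U) (hζ1 : ContDiffOn ℝ (⊤ : ℕ∞) ζ1 U)
    (W : Set ((Fin n → ℝ) × ((Fin n → ℝ) × (Fin n → ℝ)))) (hWopen : IsOpen W)
    (hWU : ∀ q ∈ W, q.2 ∈ U)
    (ξhat : (Fin n → ℝ) × ((Fin n → ℝ) × (Fin n → ℝ)) → Fin n → ℝ)
    (hξhat : ContDiffOn ℝ (⊤ : ℕ∞) ξhat W)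
    (hmemV : ∀ q ∈ W, (q.1, ξhat q) ∈ V)
    (hζeq : ∀ q ∈ W, ζ2 (q.1, ξhat q) = ζ1 q.2)
    (φ : (Fin n → ℝ) × ((Fin n → ℝ) × (Fin n → ℝ)) → ℝ)
    (hφdef : ∀ q, φ q = (z2 (q.1, ξhat q) - z1 q.2) ⬝ᵥ ζ1 q.2)
    (xs ξs : (Fin n → ℝ) × (Fin n → ℝ) → Fin n → ℝ)
    (hz12 : ∀ p ∈ U, z2 (xs p, ξs p) = z1 p)
    (hξhs : ∀ p ∈ U, ξhat (xs p, p) = ξs p) :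
    (∀ q ∈ W, ∀ i : Fin n, fderiv ℝ φ q (Pi.single i 1, 0, 0) = ξhat q i) ∧
    (∀ p ∈ U, φ (xs p, p) = 0) := by
  refine ⟨fun q hq i => ?_, fun p hp => by
    rw [hφdef, hξhs p hp, hz12 p hp, sub_self, zero_dotProduct]⟩
  have hpV := hmemV q hq
  have hξd : DifferentiableAt ℝ ξhat q :=
    (hξhat.differentiableOn (by simp)).differentiableAt (hWopen.mem_nhds hq)
  have hz1d : DifferentiableAt ℝ z1 q.2 :=
    (hz1.differentiableOn (by simp)).differentiableAt (hUopen.mem_nhds (hWU q hq))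
  have hζ1d : DifferentiableAt ℝ ζ1 q.2 :=
    (hζ1.differentiableOn (by simp)).differentiableAt (hUopen.mem_nhds (hWU q hq))
  have hz2ξ : HasFDerivAt (fun q => z2 (q.1, ξhat q))
      ((jacCLM (Z2x (q.1, ξhat q)) (Z2ξ (q.1, ξhat q))).comp
        ((ContinuousLinearMap.fst ℝ _ _).prod (fderiv ℝ ξhat q))) q :=
    (hdz2 _ hpV).comp q (hasFDerivAt_fst.prodMk hξd.hasFDerivAt)
  change fderiv ℝ φ q (Pi.single i 1, 0) = _
  rw [funext hφdef,
    fderiv_sub_dotProduct_comp_snd_apply_inl hz2ξ.differentiableAt hz1d hζ1d, hz2ξ.fderiv,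
    ← hζeq q hq, dotProduct_comm]
  simpa using dotProduct_jacCLM_of_transpose_mulVec (hrel2 _ hpV) (hrel1 _ hpV) (Pi.single i 1)
    (fderiv ℝ ξhat q (Pi.single i 1, 0))

/-- With `Φ₂ : (x,ξ) ↦ (z²,ζ²)` preserving the 1-form
(`(z²_ξ)ᵀζ² = 0`, `(z²_x)ᵀζ² = ξ` on `V`), `ξ̂` solving `ζ²(x, ξ̂(x;y,η)) = ζ¹(y,η)` on `W`,
and `φ(x;y,η) = ⟨z²(x, ξ̂(x;y,η)) − z¹(y,η), ζ¹(y,η)⟩`, one has `∇_x φ = ξ̂` on `W`;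
moreover if `z²(x*,ξ*) = z¹`, `ζ²(x*,ξ*) = ζ¹` and `ξ̂(x*;y,η) = ξ*` then `φ(x*;y,η) = 0`. -/
theorem composition_phase_x_derivative (n : ℕ)
    (V U : Set ((Fin n → ℝ) × (Fin n → ℝ))) (hVopen : IsOpen V) (hUopen : IsOpen U)
    (z2 ζ2 : (Fin n → ℝ) × (Fin n → ℝ) → Fin n → ℝ)
    (hz2 : ContDiffOn ℝ (⊤ : ℕ∞) z2 V) (hζ2 : ContDiffOn ℝ (⊤ : ℕ∞) ζ2 V)
    (Z2x Z2ξ : (Fin n → ℝ) × (Fin n → ℝ) → Matrix (Fin n) (Fin n) ℝ)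
    (hdz2 : ∀ p ∈ V, HasFDerivAt z2 (jacCLM (Z2x p) (Z2ξ p)) p)
    (hrel1 : ∀ p ∈ V, (Z2ξ p)ᵀ *ᵥ ζ2 p = 0)
    (hrel2 : ∀ p ∈ V, (Z2x p)ᵀ *ᵥ ζ2 p = p.2)
    (z1 ζ1 : (Fin n → ℝ) × (Fin n → ℝ) → Fin n → ℝ)
    (hz1 : ContDiffOn ℝ (⊤ : ℕ∞) z1 U) (hζ1 : ContDiffOn ℝ (⊤ : ℕ∞) ζ1 U)
    (W : Set ((Fin n → ℝ) × ((Fin n → ℝ) × (Fin n → ℝ)))) (hWopen : IsOpen W)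
    (hWU : ∀ q ∈ W, q.2 ∈ U)
    (ξhat : (Fin n → ℝ) × ((Fin n → ℝ) × (Fin n → ℝ)) → Fin n → ℝ)
    (hξhat : ContDiffOn ℝ (⊤ : ℕ∞) ξhat W)
    (hmemV : ∀ q ∈ W, (q.1, ξhat q) ∈ V)
    (hζeq : ∀ q ∈ W, ζ2 (q.1, ξhat q) = ζ1 q.2)
    (φ : (Fin n → ℝ) × ((Fin n → ℝ) × (Fin n → ℝ)) → ℝ)
    (hφdef : ∀ q, φ q = (z2 (q.1, ξhat q) - z1 q.2) ⬝ᵥ ζ1 q.2)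
    (xs ξs : (Fin n → ℝ) × (Fin n → ℝ) → Fin n → ℝ)
    (hxss : ContDiffOn ℝ (⊤ : ℕ∞) xs U) (hξss : ContDiffOn ℝ (⊤ : ℕ∞) ξs U)
    (hz12 : ∀ p ∈ U, z2 (xs p, ξs p) = z1 p)
    (hζ12 : ∀ p ∈ U, ζ2 (xs p, ξs p) = ζ1 p)
    (hξhs : ∀ p ∈ U, ξhat (xs p, p) = ξs p) :
    (∀ q ∈ W, ∀ i : Fin n, fderiv ℝ φ q (Pi.single i 1, 0, 0) = ξhat q i) ∧
    (∀ p ∈ U, φ (xs p, p) = 0) :=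
  composition_phase_x_derivative_general n V U hUopen z2 ζ2 Z2x Z2ξ hdz2 hrel1 hrel2 z1 ζ1 hz1 hζ1 W
    hWopen hWU ξhat hξhat hmemV hζeq φ hφdef xs ξs hz12 hξhs
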